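/- arXiv:1710.11213 — 4 statements merged into one kernel-verified Lean document; each statement's English description precedes it below -/
import Mathlib

section
/- Let n be a positive natural number and let p₁, ..., pₙ ∈ [0,1) be real numbers with ∏ᵢ (1 - pᵢ) = 1/e. Define q(t) = ∏ᵢ (1 - t·pᵢ) for t ∈ [0,1]. Then q(t) ≥ exp(-t) for all t ∈ [0,1]. -/
theorem survival_prob_ge_exp (n : ℕ) (hn : 0 < n) (p : Fin n → ℝ)
    (hp0 : ∀ i, 0 ≤ p i) (hp1 : ∀ i, p i < 1)
    (hprod : ∏ i, (1 - p i) = 1 / Real.exp 1) :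
    ∀ t ∈ Set.Icc (0:ℝ) 1, ∏ i, (1 - t * p i) ≥ Real.exp (-t) := by
  intro t ht
  obtain ⟨ht0, ht1⟩ := ht
  have key : ∀ i, (1 - p i) ^ t ≤ 1 - t * p i := by
    intro i
    have := rpow_one_add_le_one_add_mul_self (s := -p i)
      (by linarith [hp1 i]) ht0 ht1
    simpa [sub_eq_add_neg, mul_neg] using this
  have h1 : (∏ i, (1 - p i)) ^ t ≤ ∏ i, (1 - t * p i) := by
    rw [← Real.finset_prod_rpow _ _ (fun i _ => by linarith [hp1 i]) t]
    exact Finset.prod_le_prod (fun i _ => Real.rpow_nonneg (by linarith [hp1 i]) t)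
      (fun i _ => key i)
  calc Real.exp (-t) = (1 / Real.exp 1) ^ t := by
        rw [one_div, ← Real.exp_one_rpow (-t), ← Real.rpow_neg_one,
          ← Real.rpow_mul (Real.exp_pos 1).le]
        norm_num
    _ = (∏ i, (1 - p i)) ^ t := by rw [hprod]
    _ ≤ ∏ i, (1 - t * p i) := h1
end

section
/- Let r : [0,1] → ℝ be continuously differentiable with r ≥ 0, let α : [0,1] → [0,1] be continuously differentiable, and suppose real numbers U and R satisfy U ≥ ∫₀¹ (1 - α(t))·r(t) dt and R ≥ -∫₀¹ α(t)·r'(t) dt. If α(t) = 1 - e^(t-1), then U + R ≥ (1 - 1/e)·r(0). -/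
/-!
Integrating `∫ α r'` by parts turns `∫ (1 - α) r - ∫ α r'` into the boundary term
`α 0 r 0 - α 1 r 1` plus `∫ (α' + 1 - α) r`. The weight `α t = 1 - e^(t-1)` solves
`α' = α - 1` with `α 1 = 0`, so the integral term and the boundary term at `1` vanish,
leaving exactly `α 0 r 0 = (1 - 1/e) r 0`.
-/

open intervalIntegral

theorem integral_one_sub_mul_sub_integral_mul_deriv {α r r' : ℝ → ℝ} {a b : ℝ}
    (hα : ∀ t ∈ Set.uIcc a b, HasDerivAt α (α t - 1) t)
    (hr : ∀ t ∈ Set.uIcc a b, HasDerivAt r (r' t) t)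
    (hr' : IntervalIntegrable r' MeasureTheory.volume a b) :
    (∫ t in a..b, (1 - α t) * r t) - ∫ t in a..b, α t * r' t = α a * r a - α b * r b := by
  have hα' : IntervalIntegrable (fun t => α t - 1) MeasureTheory.volume a b :=
    (ContinuousOn.sub (fun t ht => (hα t ht).continuousAt.continuousWithinAt)
      continuousOn_const).intervalIntegrable
  have hneg : (∫ t in a..b, (α t - 1) * r t) = -∫ t in a..b, (1 - α t) * r t := by
    rw [← integral_neg]
    congr 1
    ext t
    ring
  rw [integral_mul_deriv_eq_deriv_mul hα hr hα' hr', hneg]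
  ring

theorem hasDerivAt_one_sub_exp_sub_one (t : ℝ) :
    HasDerivAt (fun s => 1 - Real.exp (s - 1)) ((1 - Real.exp (t - 1)) - 1) t := by
  have h := ((Real.hasDerivAt_exp (t - 1)).comp t ((hasDerivAt_id t).sub_const 1)).const_sub 1
  simpa [Function.comp_def] using h

theorem residual_lemma_general (r r' : ℝ → ℝ)
    (hderiv : ∀ t ∈ Set.Icc (0:ℝ) 1, HasDerivAt r (r' t) t)
    (hcont : ContinuousOn r' (Set.Icc (0:ℝ) 1))
    (α : ℝ → ℝ)
    (hα : α = fun t => 1 - Real.exp (t - 1))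
    (U R : ℝ)
    (hU : U ≥ ∫ t in (0:ℝ)..1, (1 - α t) * r t)
    (hR : R ≥ -∫ t in (0:ℝ)..1, α t * r' t) :
    U + R ≥ (1 - 1 / Real.exp 1) * r 0 := by
  have huIcc : Set.uIcc (0:ℝ) 1 = Set.Icc 0 1 := Set.uIcc_of_le zero_le_one
  have hr' : IntervalIntegrable r' MeasureTheory.volume 0 1 := by
    rw [← huIcc] at hcont
    exact hcont.intervalIntegrable
  have key := integral_one_sub_mul_sub_integral_mul_deriv
    (α := α) (fun t _ => hα ▸ hasDerivAt_one_sub_exp_sub_one t) (huIcc ▸ hderiv) hr'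
  have hα0 : α 0 = 1 - 1 / Real.exp 1 := by simp [hα, Real.exp_neg]
  have hα1 : α 1 = 0 := by simp [hα]
  rw [hα0, hα1] at key
  linarith

theorem residual_lemma (r r' : ℝ → ℝ)
    (hderiv : ∀ t ∈ Set.Icc (0:ℝ) 1, HasDerivAt r (r' t) t)
    (hcont : ContinuousOn r' (Set.Icc (0:ℝ) 1))
    (hnonneg : ∀ t ∈ Set.Icc (0:ℝ) 1, 0 ≤ r t)
    (α : ℝ → ℝ) (hα01 : ∀ t ∈ Set.Icc (0:ℝ) 1, α t ∈ Set.Icc (0:ℝ) 1)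
    (hα : α = fun t => 1 - Real.exp (t - 1))
    (U R : ℝ)
    (hU : U ≥ ∫ t in (0:ℝ)..1, (1 - α t) * r t)
    (hR : R ≥ -∫ t in (0:ℝ)..1, α t * r' t) :
    U + R ≥ (1 - 1 / Real.exp 1) * r 0 :=
  residual_lemma_general r r' hderiv hcont α hα U R hU hR
end

section
/- For every constant c > 0, the quantity (1 - e^(-c))·(e - 2 + 1/c)/(e - 1) is at most 1 - 1/e. -/
/-- Taylor lower bound for `exp(-y)` on `[0,1]`. -/
lemma exp_neg_taylor_lb {y : ℝ} (h0 : 0 ≤ y) (h1 : y ≤ 1) :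
    1 - y + y ^ 2 / 2 - y ^ 3 / 6 - 5 * y ^ 4 / 96 ≤ Real.exp (-y) := by
  have hb := Real.exp_bound (x := -y) (by rw [abs_neg, abs_of_nonneg h0]; exact h1)
      (n := 4) (by norm_num)
  rw [abs_neg, abs_of_nonneg h0] at hb
  have h := (abs_le.1 hb).1
  have hsum : ∑ m ∈ Finset.range 4, (-y) ^ m / (m.factorial : ℝ)
      = 1 - y + y ^ 2 / 2 - y ^ 3 / 6 := by
    simp [Finset.sum_range_succ, Nat.factorial]
    try ring
  rw [hsum] at h
  norm_num [Nat.factorial] at h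
  nlinarith [h]

/-- Cubic-error upper bound for `exp x` on `[0,1]`. -/
lemma exp_taylor_ub {x : ℝ} (h0 : 0 ≤ x) (h1 : x ≤ 1) :
    Real.exp x ≤ 1 + x + x ^ 2 / 2 + 2 * x ^ 3 / 9 := by
  have hb := Real.exp_bound' h0 h1 (n := 3) (by norm_num)
  have hsum : ∑ m ∈ Finset.range 3, x ^ m / (m.factorial : ℝ)
      = 1 + x + x ^ 2 / 2 := by
    simp [Finset.sum_range_succ, Nat.factorial]
    try ring
  rw [hsum] at hb
  norm_num [Nat.factorial] at hb
  nlinarith [hb]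

/-- Cubic lower bound for `exp y`, `y ≥ 0`. -/
lemma exp_cubic_lb {y : ℝ} (h0 : 0 ≤ y) :
    1 + y + y ^ 2 / 2 + y ^ 3 / 6 ≤ Real.exp y := by
  have h := Real.sum_le_exp_of_nonneg h0 4
  have hsum : ∑ m ∈ Finset.range 4, y ^ m / (m.factorial : ℝ)
      = 1 + y + y ^ 2 / 2 + y ^ 3 / 6 := by
    simp [Finset.sum_range_succ, Nat.factorial]
    try ring
  rwa [hsum] at h

/-- Transfer a polynomial bound through `t * B ≤ 1`. -/
lemma transfer' {E c t B : ℝ} (hcE : c ≤ E) (hB : 0 < B) (htB : t * B ≤ 1)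
    (hpoly : E - c ≤ B * (1 + (E - 2) * c)) :
    (E - c) * (t - c) ≤ (c - 1) ^ 2 := by
  have h1 : (E - c) * (t * B) ≤ (E - c) * 1 :=
    mul_le_mul_of_nonneg_left htB (by linarith)
  have e1 : (E - c) * (t - c) * B = (E - c) * (t * B) - (E - c) * (c * B) := by ring
  have e2 : (c - 1) ^ 2 * B + (E - c) * (c * B) = B * (1 + (E - 2) * c) := by ring
  have h2 : (E - c) * (t - c) * B ≤ (c - 1) ^ 2 * B := by linarith
  exact le_of_mul_le_mul_right h2 hB

set_option maxHeartbeats 800000 in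
/-- The central inequality: `(e - c) * (exp (c-1) - c) ≤ (c-1)^2` for `c > 0`. -/
lemma central_ineq (c : ℝ) (hc : 0 < c) :
    (Real.exp 1 - c) * (Real.exp (c - 1) - c) ≤ (c - 1) ^ 2 := by
  have hE1 : (2.718281828 : ℝ) < Real.exp 1 := by
    have := Real.exp_one_gt_d9; linarith
  have hE2 : Real.exp 1 < 2.718281829 := by
    have := Real.exp_one_lt_d9; linarith
  set E := Real.exp 1 with hE
  set t := Real.exp (c - 1) with ht
  have htpos : 0 < t := Real.exp_pos _
  rcases le_total c 0.4 with h04 | h04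
  · -- Case A : 0 < c ≤ 0.4
    have hlb : 1 - c + c ^ 2 / 2 - c ^ 3 / 6 - 5 * c ^ 4 / 96 ≤ Real.exp (-c) :=
      exp_neg_taylor_lb hc.le (by linarith)
    have h48 : (0 : ℝ) ≤ 1 / 2 - c / 6 - 5 * c ^ 2 / 96 := by nlinarith
    have hq : 0 ≤ c ^ 2 / 2 - c ^ 3 / 6 - 5 * c ^ 4 / 96 := by
      nlinarith [mul_nonneg (sq_nonneg c) h48]
    have hppos : (0.6 : ℝ) ≤ 1 - c + c ^ 2 / 2 - c ^ 3 / 6 - 5 * c ^ 4 / 96 := by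
      linarith
    have htB : t * (E * (1 - c + c ^ 2 / 2 - c ^ 3 / 6 - 5 * c ^ 4 / 96)) ≤ 1 := by
      have h1 : t * E = Real.exp c := by
        rw [ht, hE, ← Real.exp_add]; ring_nf
      have h2 : Real.exp c * Real.exp (-c) = 1 := by
        rw [← Real.exp_add]; simp
      calc t * (E * (1 - c + c ^ 2 / 2 - c ^ 3 / 6 - 5 * c ^ 4 / 96))
          = Real.exp c * (1 - c + c ^ 2 / 2 - c ^ 3 / 6 - 5 * c ^ 4 / 96) := by
            rw [← h1]; ring
        _ ≤ Real.exp c * Real.exp (-c) :=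
            mul_le_mul_of_nonneg_left hlb (Real.exp_pos c).le
        _ = 1 := h2
    have L1 : (2.718281828 : ℝ) - c ≤ 2.718281828 *
        (1 - c + c ^ 2 / 2 - c ^ 3 / 6 - 5 * c ^ 4 / 96) * (1 + 0.718281828 * c) := by
      nlinarith [mul_nonneg hc.le (sub_nonneg.2 h04), sq_nonneg c,
        mul_nonneg (mul_nonneg hc.le hc.le) (sub_nonneg.2 h04),
        mul_nonneg (mul_nonneg (mul_nonneg hc.le hc.le) hc.le) (sub_nonneg.2 h04),
        mul_nonneg (mul_nonneg hc.le hc.le) (mul_nonneg hc.le hc.le)]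
    have hbr : 0 ≤ ((1 - c + c ^ 2 / 2 - c ^ 3 / 6 - 5 * c ^ 4 / 96) - 1)
        + c * (1 - c + c ^ 2 / 2 - c ^ 3 / 6 - 5 * c ^ 4 / 96)
          * (E + 2.718281828 - 2) := by
      nlinarith [hq, mul_nonneg (mul_nonneg hc.le (by linarith :
        (0:ℝ) ≤ 1 - c + c ^ 2 / 2 - c ^ 3 / 6 - 5 * c ^ 4 / 96))
        (sub_nonneg.2 hE1.le), mul_nonneg hc.le (sub_nonneg.2 hppos)]
    have hpoly : E - c ≤ (E * (1 - c + c ^ 2 / 2 - c ^ 3 / 6 - 5 * c ^ 4 / 96))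
        * (1 + (E - 2) * c) := by
      nlinarith [L1, mul_nonneg (sub_nonneg.2 hE1.le) hbr]
    exact transfer' (by linarith) (by nlinarith) htB hpoly
  rcases le_total c 1 with h1 | h1
  · -- Case B : 0.4 ≤ c ≤ 1
    have hlb : 1 + (1 - c) + (1 - c) ^ 2 / 2 + (1 - c) ^ 3 / 6 ≤ Real.exp (1 - c) :=
      exp_cubic_lb (by linarith)
    have hq4 : 0 ≤ 5 * (1 - c) ^ 4 / 96 := by positivity
    have hlb' : 1 + (1 - c) + (1 - c) ^ 2 / 2 + (1 - c) ^ 3 / 6 - 5 * (1 - c) ^ 4 / 96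
        ≤ Real.exp (1 - c) := by linarith
    have hBpos : (0 : ℝ) < 1 + (1 - c) + (1 - c) ^ 2 / 2 + (1 - c) ^ 3 / 6
        - 5 * (1 - c) ^ 4 / 96 := by nlinarith [sq_nonneg (1 - c), sq_nonneg ((1-c)^2)]
    have htB : t * (1 + (1 - c) + (1 - c) ^ 2 / 2 + (1 - c) ^ 3 / 6
        - 5 * (1 - c) ^ 4 / 96) ≤ 1 := by
      have h2 : Real.exp (1 - c) * t = 1 := by
        rw [ht, ← Real.exp_add]; simp
      nlinarith [mul_le_mul_of_nonneg_right hlb' htpos.le]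
    have hpoly : E - c ≤ (1 + (1 - c) + (1 - c) ^ 2 / 2 + (1 - c) ^ 3 / 6
        - 5 * (1 - c) ^ 4 / 96) * (1 + (E - 2) * c) := by
      nlinarith [sq_nonneg (c - 1), mul_nonneg (sub_nonneg.2 h04) (sub_nonneg.2 h1),
        mul_nonneg (mul_nonneg (sub_nonneg.2 h04) (sub_nonneg.2 h1)) (sq_nonneg (c - 1)),
        mul_nonneg (sub_nonneg.2 h1) (sq_nonneg (c - 1)),
        mul_nonneg (mul_nonneg (sub_nonneg.2 h1) (sub_nonneg.2 h1)) (sq_nonneg (c - 1)),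
        mul_nonneg (sub_nonneg.2 hE1.le) (sq_nonneg (c - 1))]
    exact transfer' (by linarith) hBpos htB hpoly
  rcases le_total c 2 with h2 | h2
  · -- Case C : 1 ≤ c ≤ 2
    have hub : t ≤ 1 + (c - 1) + (c - 1) ^ 2 / 2 + 2 * (c - 1) ^ 3 / 9 :=
      exp_taylor_ub (by linarith) (by linarith)
    have hEc : (0 : ℝ) ≤ E - c := by linarith
    nlinarith [mul_le_mul_of_nonneg_left hub hEc, sq_nonneg (c - 1),
      mul_nonneg (mul_nonneg (sub_nonneg.2 h1) (sub_nonneg.2 h2)) (sq_nonneg (c - 1)),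
      mul_nonneg (sub_nonneg.2 h2) (sq_nonneg (c - 1))]
  rcases le_total c E with h3 | h3
  · -- Case D : 2 ≤ c ≤ E
    have h3c : (0 : ℝ) < 3 - c := by linarith
    have hexp : 3 - c ≤ Real.exp (2 - c) := by
      have := Real.add_one_le_exp (2 - c); linarith
    have htD : (3 - c) * t ≤ E := by
      have h4 : Real.exp (2 - c) * t = E := by
        rw [ht, hE, ← Real.exp_add]; ring_nf
      nlinarith [mul_le_mul_of_nonneg_right hexp htpos.le]
    have hEc : (0 : ℝ) ≤ E - c := by linarith
    have h5 : (E - c) * ((3 - c) * t) ≤ (E - c) * E :=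
      mul_le_mul_of_nonneg_left htD hEc
    have hpolyD : (E - c) * (E - 3 * c + c ^ 2) ≤ (c - 1) ^ 2 * (3 - c) := by
      nlinarith [sq_nonneg (c - 2), mul_nonneg (sub_nonneg.2 h2) (sub_nonneg.2 h3),
        sq_nonneg (c - E)]
    have e1 : (E - c) * (t - c) * (3 - c)
        = (E - c) * ((3 - c) * t) - (E - c) * (c * (3 - c)) := by ring
    have e2 : (E - c) * E - (E - c) * (c * (3 - c)) = (E - c) * (E - 3 * c + c ^ 2) := by
      ring
    have step : (E - c) * (t - c) * (3 - c) ≤ (c - 1) ^ 2 * (3 - c) := by linarith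
    exact le_of_mul_le_mul_right step h3c
  · -- Case E : c ≥ E
    have hlow : c ≤ t := by
      have := Real.add_one_le_exp (c - 1); rw [← ht] at this; linarith
    nlinarith [mul_nonneg (sub_nonneg.2 h3) (sub_nonneg.2 hlow), sq_nonneg (c - 1)]

theorem hard_instance_ratio_le (c : ℝ) (hc : 0 < c) :
    (1 - Real.exp (-c)) * (Real.exp 1 - 2 + 1 / c) / (Real.exp 1 - 1)
      ≤ 1 - 1 / Real.exp 1 := by
  have hE1 : (2.7 : ℝ) < Real.exp 1 := by
    have := Real.exp_one_gt_d9; linarith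
  set E := Real.exp 1 with hE
  set t := Real.exp (c - 1) with ht
  set u := Real.exp (-c) with hu
  have hupos : 0 < u := Real.exp_pos _
  have hEpos : (0 : ℝ) < E := by linarith
  have hinvc : c * (1 / c) = 1 := by field_simp
  have hinvE : E * (1 / E) = 1 := by field_simp
  have hut : u * t = 1 / E := by
    rw [hu, ht, ← Real.exp_add]
    have hx : -c + (c - 1) = -1 := by ring
    rw [hx, Real.exp_neg, one_div, hE]
  have hP : (E - c) * (t - c) ≤ (c - 1) ^ 2 := central_ineq c hc
  have hkey : (E - c) * t ≤ 1 + (E - 2) * c := by nlinarith [hP]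
  have h12 : E * u * ((E - c) * t) ≤ E * u * (1 + (E - 2) * c) :=
    mul_le_mul_of_nonneg_left hkey (by positivity)
  have h13 : E * u * ((E - c) * t) = E - c := by
    rw [show E * u * ((E - c) * t) = (E - c) * (E * (u * t)) from by ring, hut, hinvE,
      mul_one]
  have hkeyE : E - c ≤ E * u * (1 + (E - 2) * c) := by linarith
  have hkeyE' : E * (1 - u) ≤ c + E * (E - 2) * c * u := by nlinarith [hkeyE]
  rw [div_le_iff₀ (by linarith : (0 : ℝ) < E - 1)]
  have hcE : (0 : ℝ) < c * E := mul_pos hc hEpos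
  have G' : c * E * ((1 - u) * (E - 2 + 1 / c)) ≤ c * E * ((1 - 1 / E) * (E - 1)) := by
    have k1 : E * (1 - u) * (c * (1 / c)) = E * (1 - u) := by rw [hinvc]; ring
    have k2 : c * (E - 1) * (E * (1 / E)) = c * (E - 1) := by rw [hinvE]; ring
    nlinarith [hkeyE', k1, k2]
  exact le_of_mul_le_mul_left G' hcE
end

section
/- Let M be a matroid on ground set E with a nonnegative weight function w : E → ℝ≥0. For a subset A ⊆ E, let R(A) denote the maximum weight of an independent set in the contraction M/A (equivalently, the maximum of ∑_{i∈I} w(i) over sets I disjoint from A with A ∪ I independent, assuming A is independent). Then for any independent set A and any set V independent in M/A, ∑_{i∈V} (R(A) - R(A ∪ {i})) ≤ R(A). -/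
/-!
Take a base `B` of `M ／ A` of maximum weight `R(A)`; it exists because the weights are
nonnegative. Hall's theorem, applied to the fundamental circuits of the elements of `V` with
respect to `B`, gives an injection `f : V → B` such that `B - f i + i` is independent in
`M ／ A`. Hence `R(A ∪ {i}) ≥ w(B) - w(f i)`, and summing `R(A) - R(A ∪ {i}) ≤ w(f i)` over
`V` gives at most `w(B) = R(A)`.
-/

/-- The maximum weight of an independent set in the contraction `M / A`:
the supremum of `∑ i in I, w i` over finsets `I` disjoint from `A` with
`A ∪ I` independent. -/
noncomputable def resVal {α : Type*} (M : Matroid α) (w : α → ℝ) (A : Set α) : ℝ :=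
  sSup {x : ℝ | ∃ I : Finset α, Disjoint (↑I : Set α) A ∧ M.Indep (A ∪ ↑I) ∧
    x = ∑ i ∈ I, w i}

namespace Matroid

variable {α : Type*} {M : Matroid α} {B I X : Set α} {e x : α}

lemma Indep.encard_le_encard_of_subset_closure (hI : M.Indep I) (h : I ⊆ M.closure X) :
    I.encard ≤ X.encard :=
  ((hI.encard_le_eRk_of_subset h).trans_eq (M.eRk_closure_eq X)).trans (M.eRk_le_encard X)

lemma IsBase.mem_closure_fundCircuit_inter (hB : M.IsBase B) (he : e ∈ M.E) :
    e ∈ M.closure (M.fundCircuit e B ∩ B) := by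
  by_cases heB : e ∈ B
  · rw [fundCircuit_eq_of_mem heB, Set.singleton_inter_of_mem heB]
    exact M.mem_closure_of_mem rfl
  · rw [← fundCircuit_sdiff_eq_inter M heB]
    exact (hB.fundCircuit_isCircuit he heB).mem_closure_sdiff_singleton_of_mem
      (M.mem_fundCircuit e B)

lemma IsBase.indep_insert_sdiff_of_mem_fundCircuit (hB : M.IsBase B) (he : e ∈ M.E)
    (hxB : x ∈ B) (hx : x ∈ M.fundCircuit e B) : M.Indep (insert e (B \ {x})) := by
  by_cases heB : e ∈ B
  · obtain rfl : x = e := by simpa [fundCircuit_eq_of_mem heB] using hx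
    rw [Set.insert_sdiff_singleton, Set.insert_eq_of_mem hxB]
    exact hB.indep
  · rw [Set.insert_sdiff_singleton_comm (ne_of_mem_of_not_mem hxB heB).symm]
    exact (hB.indep.mem_fundCircuit_iff (by rwa [hB.closure_eq]) heB).1 hx

/-- Hall's condition holds for the sets `fundCircuit i B ∩ B`, since every `s ⊆ V` lies in the
closure of their union over `i ∈ s`. -/
theorem IsBase.exists_injective_exchange {B V : Finset α} (hB : M.IsBase ↑B)
    (hV : M.Indep ↑V) : ∃ f : V → α, Function.Injective f ∧ ∀ i : V, f i ∈ B ∧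
      M.Indep (insert ↑i (↑B \ {f i})) ∧ (↑i ∈ B → f i = i) := by
  classical
  set t : V → Finset α := fun i ↦ B.filter (· ∈ M.fundCircuit i B)
  have hall : ∀ s : Finset V, s.card ≤ (s.biUnion t).card := by
    intro s
    have hsub : (↑(s.map (Function.Embedding.subtype _)) : Set α) ⊆
        M.closure ↑(s.biUnion t) := by
      intro _ hx
      obtain ⟨i, hi, rfl⟩ := Finset.mem_map.1 hx
      refine M.closure_subset_closure ?_ (hB.mem_closure_fundCircuit_inter
        (hV.subset_ground i.2))
      intro x hx
      simp only [Finset.coe_biUnion, Set.mem_iUnion]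
      exact ⟨i, hi, by simpa [t] using hx.symm⟩
    have hW : M.Indep ↑(s.map (Function.Embedding.subtype _)) :=
      hV.subset fun _ hx ↦ by obtain ⟨i, -, rfl⟩ := Finset.mem_map.1 hx; exact i.2
    have := hW.encard_le_encard_of_subset_closure hsub
    rw [Set.encard_coe_eq_coe_finsetCard, Set.encard_coe_eq_coe_finsetCard,
      Finset.card_map] at this
    exact_mod_cast this
  obtain ⟨f, hf, hft⟩ := (Finset.all_card_le_biUnion_card_iff_exists_injective t).1 hall
  refine ⟨f, hf, fun i ↦ ?_⟩
  obtain ⟨hfB, hfC⟩ := Finset.mem_filter.1 (hft i)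
  exact ⟨hfB, hB.indep_insert_sdiff_of_mem_fundCircuit (hV.subset_ground i.2) hfB hfC,
    fun hiB ↦ by simpa [fundCircuit_eq_of_mem (Finset.mem_coe.2 hiB)] using hfC⟩

end Matroid

section resVal

open Matroid

variable {α : Type*} [Fintype α] {M : Matroid α} {w : α → ℝ} {A : Set α}

lemma finite_setOf_resVal :
    {x : ℝ | ∃ I : Finset α, Disjoint (↑I : Set α) A ∧ M.Indep (A ∪ ↑I) ∧
      x = ∑ i ∈ I, w i}.Finite :=
  (Set.finite_range fun I : Finset α ↦ ∑ i ∈ I, w i).subset fun _ ⟨I, _, _, hx⟩ ↦ ⟨I, hx.symm⟩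

lemma le_resVal (I : Finset α) (hIA : Disjoint (↑I : Set α) A) (hI : M.Indep (A ∪ ↑I)) :
    ∑ i ∈ I, w i ≤ resVal M w A :=
  le_csSup finite_setOf_resVal.bddAbove ⟨I, hIA, hI, rfl⟩

lemma exists_sum_eq_resVal (hA : M.Indep A) :
    ∃ I : Finset α, Disjoint (↑I : Set α) A ∧ M.Indep (A ∪ ↑I) ∧
      ∑ i ∈ I, w i = resVal M w A := by
  obtain ⟨I, hIA, hI, hsum⟩ := Set.Nonempty.csSup_mem
    (by exact ⟨0, ∅, by simp, by simpa using hA, by simp⟩) finite_setOf_resVal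
  exact ⟨I, hIA, hI, hsum.symm⟩

lemma exists_isBase_contract_sum_eq_resVal (hw : ∀ i, 0 ≤ w i) (hA : M.Indep A) :
    ∃ B : Finset α, (M ／ A).IsBase ↑B ∧ ∑ i ∈ B, w i = resVal M w A := by
  obtain ⟨I, hIA, hI, hIw⟩ := exists_sum_eq_resVal (w := w) hA
  obtain ⟨B, hB, hIB⟩ :=
    (hA.contract_indep_iff.2 ⟨hIA, by rwa [Set.union_comm]⟩).exists_isBase_superset
  refine ⟨(Set.toFinite B).toFinset, by simpa using hB, le_antisymm ?_ ?_⟩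
  · obtain ⟨hBA, hBi⟩ := hA.contract_indep_iff.1 hB.indep
    exact le_resVal _ (by simpa using hBA) (by simpa [Set.union_comm] using hBi)
  · rw [← hIw]
    exact Finset.sum_le_sum_of_subset_of_nonneg (by simpa using hIB) fun i _ _ ↦ hw i

lemma sum_le_resVal_union_singleton (hA : M.Indep A) {i : α} (I : Finset α) (hiI : i ∉ I)
    (hI : (M ／ A).Indep (insert i ↑I)) : ∑ j ∈ I, w j ≤ resVal M w (A ∪ {i}) := by
  obtain ⟨hIA, hIi⟩ := hA.contract_indep_iff.1 hI
  refine le_resVal I ?_ ?_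
  · rw [Set.insert_eq, Set.disjoint_union_left] at hIA
    exact Set.disjoint_union_right.2 ⟨hIA.2, by simpa using hiI⟩
  · convert hIi using 1
    rw [Set.insert_eq]
    ac_rfl

end resVal

theorem matroid_marginal_bound {α : Type*} [Fintype α] (M : Matroid α)
    (w : α → ℝ) (hw : ∀ i, 0 ≤ w i) (A : Set α) (hA : M.Indep A)
    (V : Finset α) (hVA : Disjoint (↑V : Set α) A) (hV : M.Indep (A ∪ ↑V)) :
    ∑ i ∈ V, (resVal M w A - resVal M w (A ∪ {i})) ≤ resVal M w A := by
  classical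
  obtain ⟨B, hB, hBw⟩ := exists_isBase_contract_sum_eq_resVal hw hA
  obtain ⟨f, hf, hexch⟩ :=
    hB.exists_injective_exchange (hA.contract_indep_iff.2 ⟨hVA, by rwa [Set.union_comm]⟩)
  have hterm (i : V) : resVal M w A - resVal M w (A ∪ {↑i}) ≤ w (f i) := by
    obtain ⟨hfB, hf_exch, hf_fix⟩ := hexch i
    have hi : ↑i ∉ B.erase (f i) := fun hmem ↦
      Finset.ne_of_mem_erase hmem (hf_fix (Finset.mem_of_mem_erase hmem)).symm
    have := sum_le_resVal_union_singleton (w := w) hA _ hi (by simpa using hf_exch)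
    rw [← hBw, ← Finset.sum_erase_add B w hfB]
    linarith
  calc ∑ i ∈ V, (resVal M w A - resVal M w (A ∪ {i}))
      = ∑ i : V, (resVal M w A - resVal M w (A ∪ {↑i})) := (Finset.sum_coe_sort V _).symm
    _ ≤ ∑ i : V, w (f i) := Finset.sum_le_sum fun i _ ↦ hterm i
    _ = ∑ e ∈ Finset.univ.image f, w e := (Finset.sum_image fun _ _ _ _ h ↦ hf h).symm
    _ ≤ ∑ e ∈ B, w e := Finset.sum_le_sum_of_subset_of_nonneg
        (Finset.image_subset_iff.2 fun i _ ↦ (hexch i).1) fun e _ _ ↦ hw e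
    _ = resVal M w A := hBw
end
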